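/- On ℝⁿ, the complex of polynomial differential forms P_r Λ⁰ → P_{r−1} Λ¹ → ⋯ → P_{r−n} Λⁿ with the exterior derivative is exact at every position except the leftmost, where the kernel consists of the constants. -/

import Mathlib

open scoped BigOperators

noncomputable section

/-- Differential `k`-forms on `ℝⁿ`: alternating-map valued functions. -/
abbrev DForm (n k : ℕ) := (Fin n → ℝ) → ((Fin n → ℝ) [⋀^Fin k]→ₗ[ℝ] ℝ)

/-- The underlying value function of a form. -/
def fval {n k : ℕ} (ω : DForm n k) : (Fin n → ℝ) → (Fin k → (Fin n → ℝ)) → ℝ :=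
  fun x v => ω x v

/-- Exterior derivative, given by the standard value formula. -/
def dOp {n k : ℕ} (ω : (Fin n → ℝ) → (Fin k → (Fin n → ℝ)) → ℝ) :
    (Fin n → ℝ) → (Fin (k + 1) → (Fin n → ℝ)) → ℝ :=
  fun x v => ∑ i : Fin (k + 1), (-1 : ℝ) ^ (i : ℕ) *
    fderiv ℝ (fun y => ω y (v ∘ i.succAbove)) x (v i)

/-- `ω` belongs to `P_s Λ^k`: its coefficients are polynomials of total degree
at most `s` (for `s < 0` this forces `ω = 0`, i.e. `P_s = 0`). -/
def MemP {n k : ℕ} (s : ℤ) (ω : DForm n k) : Prop :=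
  ∀ v : Fin k → (Fin n → ℝ), ∃ p : MvPolynomial (Fin n) ℝ,
    (∀ x, fval ω x v = MvPolynomial.eval x p) ∧
    (p = 0 ∨ (p.totalDegree : ℤ) ≤ s)

/-!
For a closed `(k + 1)`-form `ω`, the scaled Koszul contraction `κₜ ω (x) = ω (t x) (x, ⋯)` satisfies
`d (κₜ ω) (x) v = t q'(t) + (k + 1) q(t)` with `q(t) = ω (t x) v`, by Cartan's formula; integrating
against `tᵏ` over `[0, 1]` gives the classical homotopy `d (∫₀¹ tᵏ κₜ ω dt) = ω`. When `ω` has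
polynomial coefficients of degree `≤ D`, so does `q`, and the integral may be replaced by a
quadrature `∑ₘ cₘ κₘ₊₁ ω` that is exact in degree `≤ D` (its weights solve a Vandermonde system).
The potential obtained this way has polynomial coefficients of degree `≤ D + 1`. Closed 0-forms
have vanishing derivative and are therefore constant.
-/

open MvPolynomial

theorem MvPolynomial.differentiable_eval {n : ℕ} (p : MvPolynomial (Fin n) ℝ) :
    Differentiable ℝ (fun x : Fin n → ℝ => eval x p) := by
  induction p using MvPolynomial.induction_on with
  | C a => simp
  | add p q hp hq => simpa using hp.fun_add hq
  | mul_X p i hp => simpa using hp.fun_mul (differentiable_apply i)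

theorem MvPolynomial.eval_smul_monomial {n : ℕ} (t : ℝ) (x : Fin n → ℝ) (d : Fin n →₀ ℕ)
    (a : ℝ) : eval (t • x) (monomial d a) = t ^ d.degree * eval x (monomial d a) := by
  simp only [eval_monomial, Finsupp.prod, Pi.smul_apply, smul_eq_mul, mul_pow,
    Finset.prod_mul_distrib, Finset.prod_pow_eq_pow_sum, Finsupp.degree_apply]
  ring

theorem MvPolynomial.degree_le_totalDegree {σ R : Type*} [CommSemiring R] {p : MvPolynomial σ R}
    {d : σ →₀ ℕ} (hd : d ∈ p.support) : d.degree ≤ p.totalDegree := by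
  simpa [Finsupp.degree_apply, Finsupp.sum] using le_totalDegree hd

def IsPolyFunLE {n : ℕ} (D : ℕ) (f : (Fin n → ℝ) → ℝ) : Prop :=
  ∃ p : MvPolynomial (Fin n) ℝ, (∀ x, f x = eval x p) ∧ p.totalDegree ≤ D

namespace IsPolyFunLE

variable {n D : ℕ} {f g : (Fin n → ℝ) → ℝ}

theorem of_monomial {d : Fin n →₀ ℕ} (hd : d.degree ≤ D) (a : ℝ) :
    IsPolyFunLE D (fun x => eval x (monomial d a)) :=
  ⟨monomial d a, fun _ => rfl,
    (totalDegree_monomial_le d a).trans (by simpa [Finsupp.degree_apply, Finsupp.sum] using hd)⟩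

theorem add (hf : IsPolyFunLE D f) (hg : IsPolyFunLE D g) : IsPolyFunLE D (fun x => f x + g x) :=
  let ⟨p, hfp, hp⟩ := hf
  let ⟨q, hgq, hq⟩ := hg
  ⟨p + q, fun x => by simp [hfp, hgq], (totalDegree_add p q).trans (max_le hp hq)⟩

theorem const_mul (hf : IsPolyFunLE D f) (c : ℝ) : IsPolyFunLE D (fun x => c * f x) :=
  let ⟨p, hfp, hp⟩ := hf
  ⟨c • p, fun x => by simp [hfp], (totalDegree_smul_le c p).trans hp⟩

theorem coord_mul (hf : IsPolyFunLE D f) (l : Fin n) : IsPolyFunLE (D + 1) (fun x => x l * f x) :=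
  let ⟨p, hfp, hp⟩ := hf
  ⟨X l * p, fun x => by simp [hfp],
    (totalDegree_mul _ _).trans (by rw [totalDegree_X]; omega)⟩

theorem sum {ι : Type*} (s : Finset ι) {f : ι → (Fin n → ℝ) → ℝ}
    (hf : ∀ i ∈ s, IsPolyFunLE D (f i)) : IsPolyFunLE D (fun x => ∑ i ∈ s, f i x) := by
  classical
  induction s using Finset.induction_on with
  | empty => exact ⟨0, by simp, by simp⟩
  | insert i s hi ih =>
    simp only [Finset.sum_insert hi]
    exact (hf i (s.mem_insert_self i)).add (ih fun k hk => hf k (Finset.mem_insert_of_mem hk))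

theorem differentiable (hf : IsPolyFunLE D f) : Differentiable ℝ f := by
  obtain ⟨p, hfp, -⟩ := hf
  rw [funext hfp]
  exact p.differentiable_eval

theorem comp_smul (hf : IsPolyFunLE D f) (t : ℝ) : IsPolyFunLE D (fun x => f (t • x)) := by
  obtain ⟨p, hfp, hp⟩ := hf
  have hsum : ∀ x, f (t • x) = ∑ d ∈ p.support, t ^ d.degree * eval x (monomial d (p.coeff d)) := by
    intro x
    conv_lhs => rw [hfp, p.as_sum, map_sum]
    simp only [eval_smul_monomial]
  simp only [hsum]
  exact sum _ fun d hd =>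
    (of_monomial ((degree_le_totalDegree hd).trans hp) _).const_mul _

theorem exists_polynomial_restrict_line (hf : IsPolyFunLE D f) (x : Fin n → ℝ) :
    ∃ q : Polynomial ℝ, q.natDegree ≤ D ∧ ∀ t, q.eval t = f (t • x) := by
  obtain ⟨p, hfp, hp⟩ := hf
  refine ⟨∑ d ∈ p.support, Polynomial.C (eval x (monomial d (p.coeff d))) * Polynomial.X ^ d.degree,
    Polynomial.natDegree_sum_le_of_forall_le _ _ fun d hd =>
      (Polynomial.natDegree_C_mul_X_pow_le _ _).trans ((degree_le_totalDegree hd).trans hp),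
    fun t => ?_⟩
  conv_rhs => rw [hfp, p.as_sum, map_sum]
  simp only [Polynomial.eval_finsetSum, Polynomial.eval_mul, Polynomial.eval_C,
    Polynomial.eval_pow, Polynomial.eval_X, eval_smul_monomial, mul_comm]

end IsPolyFunLE

theorem exists_weights_eq_moments {R : ℕ} {s : Fin (R + 1) → ℝ} (hs : Function.Injective s)
    (b : ℕ → ℝ) : ∃ c : Fin (R + 1) → ℝ, ∀ d ≤ R, ∑ i, c i * s i ^ d = b d := by
  have hunit : IsUnit (Matrix.vandermonde s).transpose := by
    rw [Matrix.isUnit_iff_isUnit_det, Matrix.det_transpose]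
    exact (Matrix.det_vandermonde_ne_zero_iff.mpr hs).isUnit
  obtain ⟨c, hc⟩ := Matrix.mulVec_surjective_iff_isUnit.mpr hunit fun d => b d
  refine ⟨c, fun d hd => ?_⟩
  simpa [Matrix.mulVec, dotProduct, Matrix.vandermonde, mul_comm] using congrFun hc ⟨d, by omega⟩

theorem sum_weights_mul_eval {ι : Type*} [Fintype ι] {R : ℕ} {c s : ι → ℝ} {b : ℕ → ℝ}
    (hc : ∀ d ≤ R, ∑ i, c i * s i ^ d = b d) {u : Polynomial ℝ} (hu : u.natDegree ≤ R) :
    ∑ i, c i * u.eval (s i) = ∑ d ∈ Finset.range (R + 1), u.coeff d * b d := by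
  simp only [Polynomial.eval_eq_sum_range' (Nat.lt_succ_of_le hu), Finset.mul_sum]
  rw [Finset.sum_comm]
  refine Finset.sum_congr rfl fun d hd => ?_
  rw [← hc d (Nat.lt_succ_iff.mp (Finset.mem_range.mp hd)), Finset.mul_sum]
  exact Finset.sum_congr rfl fun i _ => by ring

/-- Since `t q' + (j + 1) q = t⁻ʲ (tʲ⁺¹ q)'`, these moments make the sum `∫₀¹ (tʲ⁺¹ q)' dt`. -/
theorem sum_weights_mul_euler_eq_eval_one {ι : Type*} [Fintype ι] {R j : ℕ} {c s : ι → ℝ}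
    (hc : ∀ d ≤ R, ∑ i, c i * s i ^ d = 1 / (j + 1 + d)) {q : Polynomial ℝ}
    (hq : q.natDegree ≤ R) :
    ∑ i, c i * (s i * q.derivative.eval (s i) + (j + 1) * q.eval (s i)) = q.eval 1 := by
  set u := Polynomial.C ((j : ℝ) + 1) * q + Polynomial.X * q.derivative
  have hu : ∀ d, u.coeff d = (j + 1 + d) * q.coeff d := by
    rintro (_ | d)
    · simp [u]
    · simp only [u, Polynomial.coeff_add, Polynomial.coeff_C_mul, Polynomial.coeff_X_mul,
        Polynomial.coeff_derivative]
      push_cast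
      ring
  have hudeg : u.natDegree ≤ R :=
    Polynomial.natDegree_le_iff_coeff_eq_zero.mpr fun d hd => by
      rw [hu, Polynomial.coeff_eq_zero_of_natDegree_lt (hq.trans_lt hd), mul_zero]
  calc ∑ i, c i * (s i * q.derivative.eval (s i) + (j + 1) * q.eval (s i))
      = ∑ i, c i * u.eval (s i) :=
        Finset.sum_congr rfl fun i _ => by
          simp only [u, Polynomial.eval_add, Polynomial.eval_mul, Polynomial.eval_C,
            Polynomial.eval_X]
          ring
    _ = ∑ d ∈ Finset.range (R + 1), u.coeff d * (1 / (j + 1 + d)) := sum_weights_mul_eval hc hudeg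
    _ = ∑ d ∈ Finset.range (R + 1), q.coeff d := Finset.sum_congr rfl fun d _ => by
        rw [hu]; field_simp
    _ = q.eval 1 := by simp [Polynomial.eval_eq_sum_range' (Nat.lt_succ_of_le hq)]

section ExteriorDerivative

variable {n k : ℕ}

theorem fval_sum_smul {ι : Type*} (s : Finset ι) (c : ι → ℝ) (ω : ι → DForm n k)
    (x : Fin n → ℝ) (v : Fin k → Fin n → ℝ) :
    fval (∑ i ∈ s, c i • ω i) x v = ∑ i ∈ s, c i * fval (ω i) x v := by
  classical
  induction s using Finset.induction_on with
  | empty => simp [fval]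
  | insert i s hi ih => simp_all [fval, Finset.sum_insert hi]

theorem fval_cons_eq_sum (ω : DForm n (k + 1)) (x u : Fin n → ℝ) (w : Fin k → Fin n → ℝ) :
    fval ω x (Fin.cons u w) = ∑ l, u l * fval ω x (Fin.cons (Pi.single l 1) w) := by
  have he : ∀ l : Fin n, (fun j => if l = j then (1 : ℝ) else 0) = Pi.single l 1 := fun l => by
    ext j; simp [Pi.single_apply, eq_comm]
  have := LinearMap.pi_apply_eq_sum_univ ((ω x).toMultilinearMap.toLinearMap (Fin.cons 0 w) 0) u
  simpa [fval, MultilinearMap.toLinearMap_apply, Fin.update_cons_zero, he] using this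

theorem fval_cons_removeNth (ω : DForm n (k + 1)) (x : Fin n → ℝ) (v : Fin (k + 1) → Fin n → ℝ)
    (a : Fin (k + 1)) :
    fval ω x (Fin.cons (v a) (a.removeNth v)) = (-1) ^ (a : ℕ) * fval ω x v := by
  have h := (ω x).map_insertNth a (v a) (a.removeNth v)
  rw [Fin.insertNth_self_removeNth] at h
  simp only [fval, h, zsmul_eq_mul, Int.cast_pow, Int.cast_neg, Int.cast_one, ← mul_assoc,
    ← mul_pow, neg_one_mul, neg_neg, one_pow, one_mul]
  rfl

theorem dOp_cons (f : (Fin n → ℝ) → (Fin (k + 1) → Fin n → ℝ) → ℝ) (x u : Fin n → ℝ)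
    (v : Fin (k + 1) → Fin n → ℝ) :
    dOp f x (Fin.cons u v) = fderiv ℝ (fun y => f y v) x u -
      ∑ a : Fin (k + 1), (-1) ^ (a : ℕ) *
        fderiv ℝ (fun y => f y (Fin.cons u (a.removeNth v))) x (v a) := by
  simp [dOp, Fin.sum_univ_succ, pow_succ, sub_eq_add_neg]

theorem dOp_sum_mul {ι : Type*} (s : Finset ι) (c : ι → ℝ)
    (f : ι → (Fin n → ℝ) → (Fin k → Fin n → ℝ) → ℝ)
    (hf : ∀ i ∈ s, ∀ v, Differentiable ℝ (fun y => f i y v)) (x : Fin n → ℝ)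
    (v : Fin (k + 1) → Fin n → ℝ) :
    dOp (fun y w => ∑ i ∈ s, c i * f i y w) x v = ∑ i ∈ s, c i * dOp (f i) x v := by
  simp only [dOp, Finset.mul_sum]
  rw [Finset.sum_comm]
  refine Finset.sum_congr rfl fun a _ => ?_
  rw [fderiv_fun_sum fun i hi => ((hf i hi _).const_mul (c i)).differentiableAt]
  simp only [sum_apply, Finset.mul_sum]
  refine Finset.sum_congr rfl fun i hi => ?_
  rw [fderiv_const_mul (hf i hi _).differentiableAt]
  simp only [FunLike.coe_smul, Pi.smul_apply, smul_eq_mul]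
  ring

def koszul (t : ℝ) (ω : DForm n (k + 1)) : DForm n k := fun x => (ω (t • x)).curryLeft x

theorem fderiv_fval_koszul {ω : DForm n (k + 1)} (hω : ∀ v, Differentiable ℝ (fun y => fval ω y v))
    (t : ℝ) (x u : Fin n → ℝ) (w : Fin k → Fin n → ℝ) :
    fderiv ℝ (fun y => fval (koszul t ω) y w) x u =
      fval ω (t • x) (Fin.cons u w) +
        t * fderiv ℝ (fun z => fval ω z (Fin.cons x w)) (t • x) u := by
  set g : Fin n → (Fin n → ℝ) → ℝ := fun l z => fval ω z (Fin.cons (Pi.single l 1) w)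
  have hg : ∀ l, HasFDerivAt (fun y => g l (t • y))
      ((fderiv ℝ (g l) (t • x)).comp (t • ContinuousLinearMap.id ℝ _)) x := fun l =>
    ((hω _).differentiableAt.hasFDerivAt).comp x ((hasFDerivAt_id x).const_smul t)
  have hsum : HasFDerivAt (fun y => ∑ l, y l * g l (t • y))
      (∑ l, (x l • (fderiv ℝ (g l) (t • x)).comp (t • ContinuousLinearMap.id ℝ _) +
        g l (t • x) • ContinuousLinearMap.proj l)) x :=
    HasFDerivAt.fun_sum fun l _ => (hasFDerivAt_apply l x).mul (hg l)
  have hK : (fun y => fval (koszul t ω) y w) = fun y => ∑ l, y l * g l (t • y) :=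
    funext fun y => fval_cons_eq_sum _ _ _ _
  have hx : (fun z => fval ω z (Fin.cons x w)) = fun z => ∑ l, x l * g l z :=
    funext fun z => fval_cons_eq_sum _ _ _ _
  rw [hK, hsum.fderiv, hx, fderiv_fun_sum fun l _ => ((hω _).const_mul (x l)).differentiableAt,
    fval_cons_eq_sum]
  simp only [sum_apply, add_apply, FunLike.coe_smul,
    Pi.smul_apply, smul_eq_mul, Finset.mul_sum, ← Finset.sum_add_distrib]
  refine Finset.sum_congr rfl fun l _ => ?_
  rw [fderiv_const_mul ((hω _).differentiableAt)]
  simp only [ContinuousLinearMap.comp_smulₛₗ, Real.ringHom_apply, ContinuousLinearMap.comp_id,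
    smul_apply, smul_eq_mul, ContinuousLinearMap.proj_apply, g]
  ring

end ExteriorDerivative

theorem fderiv_smul_apply_eq_derivative_eval {E : Type*} [NormedAddCommGroup E] [NormedSpace ℝ E]
    {f : E → ℝ} (hf : Differentiable ℝ f) {x : E} {q : Polynomial ℝ}
    (hq : ∀ t, q.eval t = f (t • x)) (t : ℝ) : fderiv ℝ f (t • x) x = q.derivative.eval t := by
  have h₁ : HasDerivAt (fun s : ℝ => f (s • x)) (fderiv ℝ f (t • x) x) t := by
    simpa [Function.comp_def] using
      (hf _).hasFDerivAt.comp_hasDerivAt t ((hasDerivAt_id' t).smul_const x)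
  have h₂ : HasDerivAt (fun s : ℝ => f (s • x)) (q.derivative.eval t) t := by
    simpa only [← hq] using q.hasDerivAt t
  exact h₁.unique h₂

section PolynomialForms

variable {n k : ℕ}

theorem dOp_koszul_of_closed {ω : DForm n (k + 1)}
    (hω : ∀ v, Differentiable ℝ (fun y => fval ω y v)) (hcl : ∀ x v, dOp (fval ω) x v = 0)
    (t : ℝ) (x : Fin n → ℝ) (v : Fin (k + 1) → Fin n → ℝ) :
    dOp (fval (koszul t ω)) x v =
      t * fderiv ℝ (fun y => fval ω y v) (t • x) x + (k + 1) * fval ω (t • x) v := by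
  have hclosed := dOp_cons (fval ω) (t • x) x v
  rw [hcl, eq_comm, sub_eq_zero] at hclosed
  have hsq : ∀ a : ℕ, (-1 : ℝ) ^ a * (-1) ^ a = 1 := fun a => by rw [← mul_pow]; norm_num
  calc dOp (fval (koszul t ω)) x v
      = ∑ a : Fin (k + 1), (-1) ^ (a : ℕ) * (fval ω (t • x) (Fin.cons (v a) (a.removeNth v)) +
          t * fderiv ℝ (fun z => fval ω z (Fin.cons x (a.removeNth v))) (t • x) (v a)) := by
        simp only [dOp, fderiv_fval_koszul hω]
        rfl
    _ = ∑ a : Fin (k + 1), (fval ω (t • x) v + t * ((-1) ^ (a : ℕ) *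
          fderiv ℝ (fun z => fval ω z (Fin.cons x (a.removeNth v))) (t • x) (v a))) :=
        Finset.sum_congr rfl fun a _ => by
          rw [fval_cons_removeNth]
          linear_combination fval ω (t • x) v * hsq a
    _ = t * fderiv ℝ (fun y => fval ω y v) (t • x) x + (k + 1) * fval ω (t • x) v := by
        rw [Finset.sum_add_distrib, ← Finset.mul_sum, ← hclosed]
        simp only [Finset.sum_const, Finset.card_univ, Fintype.card_fin, nsmul_eq_mul,
          Nat.cast_add, Nat.cast_one]
        ring

theorem IsPolyFunLE.fval_koszul {D : ℕ} {ω : DForm n (k + 1)}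
    (hω : ∀ v, IsPolyFunLE D (fun x => fval ω x v)) (t : ℝ) (w : Fin k → Fin n → ℝ) :
    IsPolyFunLE (D + 1) (fun x => fval (koszul t ω) x w) := by
  have hK : (fun x => fval (koszul t ω) x w) =
      fun x => ∑ l, x l * fval ω (t • x) (Fin.cons (Pi.single l 1) w) :=
    funext fun x => fval_cons_eq_sum _ _ _ _
  rw [hK]
  exact IsPolyFunLE.sum _ fun l _ => ((hω _).comp_smul t).coord_mul l

theorem exists_koszul_potential {D : ℕ} {ω : DForm n (k + 1)}
    (hω : ∀ v, IsPolyFunLE D (fun x => fval ω x v)) (hcl : ∀ x v, dOp (fval ω) x v = 0) :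
    ∃ η : DForm n k, (∀ w, IsPolyFunLE (D + 1) (fun x => fval η x w)) ∧
      ∀ x v, dOp (fval η) x v = fval ω x v := by
  have hnodes : Function.Injective fun m : Fin (D + 1) => (m : ℝ) + 1 := fun a b h => by
    simpa [Fin.val_inj] using h
  obtain ⟨c, hc⟩ := exists_weights_eq_moments hnodes fun d => 1 / (k + 1 + d)
  have hη : fval (∑ m, c m • koszul ((m : ℝ) + 1) ω) =
      fun y w => ∑ m, c m * fval (koszul ((m : ℝ) + 1) ω) y w :=
    funext₂ (fval_sum_smul _ _ _)
  refine ⟨∑ m, c m • koszul ((m : ℝ) + 1) ω, fun w => ?_, fun x v => ?_⟩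
  · rw [hη]
    exact IsPolyFunLE.sum _ fun m _ => (IsPolyFunLE.fval_koszul hω _ w).const_mul _
  obtain ⟨q, hqD, hq⟩ := (hω v).exists_polynomial_restrict_line x
  have hdiff : ∀ v, Differentiable ℝ (fun y => fval ω y v) := fun v => (hω v).differentiable
  calc dOp (fval (∑ m, c m • koszul ((m : ℝ) + 1) ω)) x v
      = ∑ m, c m * dOp (fval (koszul ((m : ℝ) + 1) ω)) x v := by
        rw [hη]
        exact dOp_sum_mul _ _ _ (fun m _ w => (IsPolyFunLE.fval_koszul hω _ w).differentiable) x v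
    _ = ∑ m : Fin (D + 1), c m * (((m : ℝ) + 1) * q.derivative.eval ((m : ℝ) + 1) +
          (k + 1) * q.eval ((m : ℝ) + 1)) := by
        simp only [dOp_koszul_of_closed hdiff hcl, hq,
          fderiv_smul_apply_eq_derivative_eval (hdiff v) hq]
    _ = q.eval 1 := sum_weights_mul_euler_eq_eval_one hc hqD
    _ = fval ω x v := by rw [hq, one_smul]

theorem memP_iff_isPolyFunLE {s : ℤ} {D : ℕ} (hD : (D : ℤ) = s) (ω : DForm n k) :
    MemP s ω ↔ ∀ v, IsPolyFunLE D (fun x => fval ω x v) := by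
  subst hD
  refine forall_congr' fun v => exists_congr fun p => and_congr_right fun _ => ?_
  constructor
  · rintro (rfl | h)
    · simp
    · exact_mod_cast h
  · exact fun h => Or.inr (by exact_mod_cast h)

theorem MemP.fval_eq_zero {s : ℤ} (hs : s < 0) {ω : DForm n k} (hω : MemP s ω)
    (x : Fin n → ℝ) (v : Fin k → Fin n → ℝ) : fval ω x v = 0 := by
  obtain ⟨p, hp, rfl | hdeg⟩ := hω v
  · simp [hp]
  · omega

theorem memP_zero (s : ℤ) : MemP s (0 : DForm n k) :=
  fun _ => ⟨0, fun _ => by simp [fval], Or.inl rfl⟩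

theorem dOp_fval_zero (x : Fin n → ℝ) (v : Fin (k + 1) → Fin n → ℝ) :
    dOp (fval (0 : DForm n k)) x v = 0 := by
  simp [dOp, fval]

theorem exists_const_of_closed_zeroForm {ω : DForm n 0}
    (hω : ∀ v, Differentiable ℝ (fun y => fval ω y v)) (hcl : ∀ x v, dOp (fval ω) x v = 0) :
    ∃ c, ∀ x v, fval ω x v = c := by
  set g := fun y => fval ω y Fin.elim0
  have hg : ∀ y, fderiv ℝ g y = 0 := fun y => ContinuousLinearMap.ext fun u => by
    simpa [dOp, g, Subsingleton.elim _ (Fin.elim0 : Fin 0 → Fin n → ℝ)] using hcl y fun _ => u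
  refine ⟨g 0, fun x v => ?_⟩
  rw [Subsingleton.elim v Fin.elim0]
  exact is_const_of_fderiv_eq_zero (hω _) hg x 0

end PolynomialForms

/-- The polynomial de Rham complex
`P_r Λ⁰ → P_{r−1} Λ¹ → ⋯ → P_{r−n} Λⁿ` on `ℝⁿ` is exact at every position except
the leftmost, where the kernel consists of the constants. -/
theorem poly_deRham_exact (n r : ℕ) :
    (∀ ω : DForm n 0, MemP (r : ℤ) ω →
      (∀ (x : Fin n → ℝ) (v : Fin 1 → (Fin n → ℝ)), dOp (fval ω) x v = 0) →
      ∃ c : ℝ, ∀ (x : Fin n → ℝ) (v : Fin 0 → (Fin n → ℝ)), fval ω x v = c) ∧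
    (∀ j : ℕ, j + 1 ≤ n → ∀ ω : DForm n (j + 1),
      MemP ((r : ℤ) - (j + 1)) ω →
      (∀ (x : Fin n → ℝ) (v : Fin (j + 2) → (Fin n → ℝ)), dOp (fval ω) x v = 0) →
      ∃ η : DForm n j, MemP ((r : ℤ) - j) η ∧
        ∀ (x : Fin n → ℝ) (v : Fin (j + 1) → (Fin n → ℝ)),
          dOp (fval η) x v = fval ω x v) := by
  refine ⟨fun ω hω hcl => ?_, fun j _ ω hω hcl => ?_⟩
  · have hpoly := (memP_iff_isPolyFunLE rfl ω).mp hω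
    exact exists_const_of_closed_zeroForm (fun v => (hpoly v).differentiable) hcl
  by_cases hjr : j + 1 ≤ r
  · have hpoly := (memP_iff_isPolyFunLE (D := r - (j + 1)) (by omega) ω).mp hω
    obtain ⟨η, hη, hdη⟩ := exists_koszul_potential hpoly hcl
    exact ⟨η, (memP_iff_isPolyFunLE (by omega) η).mpr hη, hdη⟩
  · refine ⟨0, memP_zero _, fun x v => ?_⟩
    rw [dOp_fval_zero, hω.fval_eq_zero (by omega)]
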